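/- arXiv:2201.01212 — 3 statements merged into one kernel-verified Lean document; each statement's English description precedes it below -/
import Mathlib

section
/- Fix Δ_1 ≠ Δ_2 (with Δ_1, Δ_2 > 0). Then the classification rule x ↦ argmax_{y∈{1,2}} α_y · p_y(x)^{1/Δ_y} (with any constants α_1, α_2 > 0) cannot coincide with the Bayes rule x ↦ argmax_y c_y p_y(x) (for any fixed positive constants c_1, c_2) for all probability assignments: concretely, there exist pairs (p_1, p_2) and (p_1', p_2') = Γ·(p_1, p_2) with Γ ≠ 1, Γ > 0, such that c_1 p_1 = c_2 p_2 and c_1 p_1' = c_2 p_2' (both on the Bayes decision boundary), but α_1 p_1^{1/Δ_1} = α_2 p_2^{1/Δ_2} and α_1 (p_1')^{1/Δ_1} = α_2 (p_2')^{1/Δ_2} cannot both hold. Hence the parametric cross-entropy loss with distinct multiplicative adjustments is not Fisher consistent for the standard (or balanced) classification error. -/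
/-- with distinct multiplicative adjustments `Δ₁ ≠ Δ₂`, the rule
`argmax_y α_y p_y^{1/Δ_y}` cannot coincide with the Bayes rule `argmax_y c_y p_y`:
there are two posterior pairs, related by a scaling `Γ ≠ 1`, both on the Bayes
decision boundary, at which the adjusted-rule boundary equations cannot both hold. -/
theorem parametric_CE_not_fisher_consistent
    (Δ₁ Δ₂ : ℝ) (hΔ₁ : 0 < Δ₁) (hΔ₂ : 0 < Δ₂) (hne : Δ₁ ≠ Δ₂)
    (α₁ α₂ c₁ c₂ : ℝ) (hα₁ : 0 < α₁) (hα₂ : 0 < α₂) (hc₁ : 0 < c₁) (hc₂ : 0 < c₂) :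
    ∃ p₁ p₂ p₁' p₂' Γ : ℝ,
      0 < p₁ ∧ 0 < p₂ ∧ 0 < Γ ∧ Γ ≠ 1 ∧
      p₁' = Γ * p₁ ∧ p₂' = Γ * p₂ ∧
      c₁ * p₁ = c₂ * p₂ ∧ c₁ * p₁' = c₂ * p₂' ∧
      ¬ (α₁ * p₁ ^ (1 / Δ₁) = α₂ * p₂ ^ (1 / Δ₂) ∧
         α₁ * p₁' ^ (1 / Δ₁) = α₂ * p₂' ^ (1 / Δ₂)) := by
  refine ⟨c₂, c₁, 2 * c₂, 2 * c₁, 2, hc₂, hc₁, by norm_num, by norm_num, rfl, rfl,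
    mul_comm c₁ c₂, by ring, ?_⟩
  rintro ⟨h1, h2⟩
  rw [Real.mul_rpow (by norm_num) hc₂.le, Real.mul_rpow (by norm_num) hc₁.le] at h2
  have h2' : (2:ℝ) ^ (1 / Δ₁) * (α₁ * c₂ ^ (1 / Δ₁)) =
      (2:ℝ) ^ (1 / Δ₂) * (α₂ * c₁ ^ (1 / Δ₂)) := by linarith [h2]
  rw [← h1] at h2'
  have hpos : 0 < α₁ * c₂ ^ (1 / Δ₁) :=
    mul_pos hα₁ (Real.rpow_pos_of_pos hc₂ _)
  have h3 : (2:ℝ) ^ (1 / Δ₁) = (2:ℝ) ^ (1 / Δ₂) :=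
    mul_right_cancel₀ hpos.ne' h2'
  have h4 : 1 / Δ₁ = 1 / Δ₂ :=
    le_antisymm
      ((Real.rpow_le_rpow_left_iff (by norm_num : (1:ℝ) < 2)).mp h3.le)
      ((Real.rpow_le_rpow_left_iff (by norm_num : (1:ℝ) < 2)).mp h3.ge)
  exact hne (by field_simp at h4; linarith)
end

section
/- Consider linearly separable binary data (x_i, y_i)_{i=1}^n with y_i ∈ {±1}, and the cost-sensitive SVM: minimize ‖w‖₂ subject to wᵀx_i ≥ 1/Δ₊ for y_i = +1 and wᵀx_i ≤ −1/Δ₋ for y_i = −1, where Δ₊, Δ₋ ∈ (0,1]. Let ŵ be its minimizer. Define augmentation radii ε₊ = (1/Δ₊ − 1)/‖ŵ‖₂ and ε₋ = (1/Δ₋ − 1)/‖ŵ‖₂. Then ŵ is also the minimizer of the spherically-augmented SVM: minimize ‖w‖₂ subject to wᵀx_i − ε₊‖w‖₂ ≥ 1 for y_i = +1 and wᵀx_i + ε₋‖w‖₂ ≤ −1 for y_i = −1. -/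
open scoped RealInnerProductSpace

/-- the cost-sensitive SVM with margins `1/Δ₊`, `1/Δ₋` is equivalent to the
spherically-augmented SVM with augmentation radii `ε± = (1/Δ± − 1)/‖ŵ‖`. -/
theorem csSVM_eq_augmented_SVM
    {d n : ℕ} (x : Fin n → EuclideanSpace ℝ (Fin d)) (y : Fin n → ℝ)
    (hy : ∀ i, y i = 1 ∨ y i = -1)
    (Δp Δm : ℝ) (hΔp : 0 < Δp ∧ Δp ≤ 1) (hΔm : 0 < Δm ∧ Δm ≤ 1)
    (wh : EuclideanSpace ℝ (Fin d)) (hwh : wh ≠ 0)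
    -- `wh` is feasible for the CS-SVM:
    (hfeasp : ∀ i, y i = 1 → 1 / Δp ≤ ⟪wh, x i⟫)
    (hfeasm : ∀ i, y i = -1 → ⟪wh, x i⟫ ≤ -(1 / Δm))
    -- `wh` is optimal for the CS-SVM:
    (hopt : ∀ w : EuclideanSpace ℝ (Fin d),
      (∀ i, y i = 1 → 1 / Δp ≤ ⟪w, x i⟫) →
      (∀ i, y i = -1 → ⟪w, x i⟫ ≤ -(1 / Δm)) → ‖wh‖ ≤ ‖w‖)
    (εp εm : ℝ)
    (hεp : εp = (1 / Δp - 1) / ‖wh‖) (hεm : εm = (1 / Δm - 1) / ‖wh‖) :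
    -- `wh` is feasible and optimal for the spherically-augmented SVM:
    (∀ i, y i = 1 → 1 ≤ ⟪wh, x i⟫ - εp * ‖wh‖) ∧
    (∀ i, y i = -1 → ⟪wh, x i⟫ + εm * ‖wh‖ ≤ -1) ∧
    (∀ w : EuclideanSpace ℝ (Fin d),
      (∀ i, y i = 1 → 1 ≤ ⟪w, x i⟫ - εp * ‖w‖) →
      (∀ i, y i = -1 → ⟪w, x i⟫ + εm * ‖w‖ ≤ -1) → ‖wh‖ ≤ ‖w‖) := by
  have hwpos : 0 < ‖wh‖ := norm_pos_iff.mpr hwh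
  have hwne : ‖wh‖ ≠ 0 := ne_of_gt hwpos
  have hεpwh : εp * ‖wh‖ = 1 / Δp - 1 := by
    rw [hεp]; field_simp
  have hεmwh : εm * ‖wh‖ = 1 / Δm - 1 := by
    rw [hεm]; field_simp
  have hΔp1 : 1 ≤ 1 / Δp := by rw [le_div_iff₀ hΔp.1]; linarith
  have hΔm1 : 1 ≤ 1 / Δm := by rw [le_div_iff₀ hΔm.1]; linarith
  refine ⟨fun i hi => by have := hfeasp i hi; linarith [hεpwh],
         fun i hi => by have := hfeasm i hi; linarith [hεmwh], ?_⟩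
  intro w hp hm
  by_contra hlt
  push_neg at hlt
  by_cases hw0 : w = 0
  · -- then the augmented constraints force no examples; 0 is CS-feasible
    subst hw0
    have : ‖wh‖ ≤ ‖(0 : EuclideanSpace ℝ (Fin d))‖ := by
      apply hopt 0
      · intro i hi
        have := hp i hi
        simp [inner_zero_left] at this
        linarith
      · intro i hi
        have := hm i hi
        simp [inner_zero_left] at this
        linarith
    simp at this
    exact hwh this
  · have hwpos' : 0 < ‖w‖ := norm_pos_iff.mpr hw0
    set s : ℝ := ‖w‖ / ‖wh‖ with hs
    have hs0 : 0 < s := div_pos hwpos' hwpos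
    have hs1 : s < 1 := (div_lt_one hwpos).mpr hlt
    have hεpw : εp * ‖w‖ = (1 / Δp - 1) * s := by
      rw [hεp, hs]; field_simp
    have hεmw : εm * ‖w‖ = (1 / Δm - 1) * s := by
      rw [hεm, hs]; field_simp
    have hdenp : 0 < 1 + (1 / Δp - 1) * s := by nlinarith
    have hdenm : 0 < 1 + (1 / Δm - 1) * s := by nlinarith
    set a : ℝ := (1 / Δp) / (1 + (1 / Δp - 1) * s) with ha
    set b : ℝ := (1 / Δm) / (1 + (1 / Δm - 1) * s) with hb
    have ha0 : 0 < a := div_pos (by linarith) hdenp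
    have hb0 : 0 < b := div_pos (by linarith) hdenm
    set c : ℝ := max a b with hc
    have hc0 : 0 < c := lt_max_of_lt_left ha0
    have hca : a ≤ c := le_max_left a b
    have hcb : b ≤ c := le_max_right a b
    -- c • w is CS-feasible
    have hfeas1 : ∀ i, y i = 1 → 1 / Δp ≤ ⟪c • w, x i⟫ := by
      intro i hi
      have h1 := hp i hi
      rw [real_inner_smul_left]
      have h2 : 1 + (1 / Δp - 1) * s ≤ ⟪w, x i⟫ := by linarith [hεpw]
      have h3 : a * (1 + (1 / Δp - 1) * s) = 1 / Δp :=
        div_mul_cancel₀ _ hdenp.ne'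
      calc 1 / Δp = a * (1 + (1 / Δp - 1) * s) := h3.symm
        _ ≤ c * (1 + (1 / Δp - 1) * s) := mul_le_mul_of_nonneg_right hca hdenp.le
        _ ≤ c * ⟪w, x i⟫ := mul_le_mul_of_nonneg_left h2 hc0.le
    have hfeas2 : ∀ i, y i = -1 → ⟪c • w, x i⟫ ≤ -(1 / Δm) := by
      intro i hi
      have h1 := hm i hi
      rw [real_inner_smul_left]
      have h2 : ⟪w, x i⟫ ≤ -(1 + (1 / Δm - 1) * s) := by linarith [hεmw]
      have h3 : b * (1 + (1 / Δm - 1) * s) = 1 / Δm :=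
        div_mul_cancel₀ _ hdenm.ne'
      calc c * ⟪w, x i⟫ ≤ c * (-(1 + (1 / Δm - 1) * s)) :=
            mul_le_mul_of_nonneg_left h2 hc0.le
        _ = -(c * (1 + (1 / Δm - 1) * s)) := by ring
        _ ≤ -(b * (1 + (1 / Δm - 1) * s)) := by
            have := mul_le_mul_of_nonneg_right hcb hdenm.le
            linarith
        _ = -(1 / Δm) := by rw [h3]
    have hnorm : ‖c • w‖ = c * ‖w‖ := by
      rw [norm_smul, Real.norm_eq_abs, abs_of_pos hc0]
    have hlt2 : c * ‖w‖ < ‖wh‖ := by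
      have haw : a * ‖w‖ < ‖wh‖ := by
        rw [ha, div_mul_eq_mul_div, div_lt_iff₀ hdenp]
        have hsw : ‖w‖ = s * ‖wh‖ := by rw [hs]; field_simp
        nlinarith
      have hbw : b * ‖w‖ < ‖wh‖ := by
        rw [hb, div_mul_eq_mul_div, div_lt_iff₀ hdenm]
        have hsw : ‖w‖ = s * ‖wh‖ := by rw [hs]; field_simp
        nlinarith
      rcases max_cases a b with ⟨h, _⟩ | ⟨h, _⟩ <;> rw [hc, h] <;> assumption
    have := hopt (c • w) hfeas1 hfeas2
    rw [hnorm] at this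
    linarith
end

section
/- (Decision-boundary invariance under symmetric spherical augmentation.) Consider linearly separable binary data and the SVM: min ‖w‖₂ subject to y_i wᵀx_i ≥ 1 for all i. Apply equal spherical augmentation of radius ε to both classes, yielding: min ‖w‖₂ subject to y_i wᵀx_i − ε‖w‖₂ ≥ 1, with ε ≥ 0 small enough that the problem is feasible. Then the minimizer of the augmented problem is a positive scalar multiple of the minimizer of the original SVM; in particular the decision boundary {x : wᵀx = 0} is unchanged. -/
/-!
Rescaling by `(1 + ε‖w‖)⁻¹` maps the augmented feasible set into the original one, and its inverse
`(1 - ε‖u‖)⁻¹` maps the original feasible set back. Comparing norms through these two maps shows that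
the rescaled augmented minimizer has norm at most `‖ŵ‖`, so it is itself a minimum-norm point of the
original (convex) feasible set. In a strictly convex space that point is unique, so it equals `ŵ`.
-/

open scoped RealInnerProductSpace

section

variable {E : Type*} [NormedAddCommGroup E]

theorem Convex.eq_of_isMinOn_norm [NormedSpace ℝ E] [StrictConvexSpace ℝ E] {S : Set E}
    (hS : Convex ℝ S) {u v : E} (hu : u ∈ S) (hv : v ∈ S)
    (hu_min : IsMinOn (‖·‖) S u) (hv_min : IsMinOn (‖·‖) S v) : u = v := by
  have hnorm : ‖u‖ = ‖v‖ := le_antisymm (hu_min hv) (hv_min hu)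
  by_contra hne
  have hmid : (1 / 2 : ℝ) • (u + v) ∈ S := by
    rw [smul_add]
    exact hS hu hv (by norm_num) (by norm_num) (by norm_num)
  exact ((norm_midpoint_lt_iff hnorm).2 hne).not_ge (hu_min hmid)

theorem norm_inv_one_add_smul_le [NormedSpace ℝ E] {ε : ℝ} (hε : 0 ≤ ε) {u w : E}
    (hsmall : ε * ‖u‖ < 1) (hw : ‖w‖ ≤ ‖(1 - ε * ‖u‖)⁻¹ • u‖) :
    ‖(1 + ε * ‖w‖)⁻¹ • w‖ ≤ ‖u‖ := by
  have hpos : 0 < 1 - ε * ‖u‖ := sub_pos.2 hsmall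
  rw [norm_smul_of_nonneg (inv_pos.2 hpos).le, inv_mul_eq_div, le_div_iff₀ hpos] at hw
  rw [norm_smul_of_nonneg (by positivity), inv_mul_le_iff₀ (by positivity)]
  nlinarith

variable [InnerProductSpace ℝ E] {ι : Type*} (x : ι → E) (y : ι → ℝ)

def svmFeasible : Set E := {w | ∀ i, 1 ≤ y i * ⟪w, x i⟫}

/-- The worst case of `1 ≤ yᵢ ⟪w, x⟫` over the ball of radius `ε` around `xᵢ`. -/
def augmentedSvmFeasible (ε : ℝ) : Set E := {w | ∀ i, 1 ≤ y i * ⟪w, x i⟫ - ε * ‖w‖}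

theorem convex_svmFeasible : Convex ℝ (svmFeasible x y) := by
  simp only [svmFeasible, Set.ofPred_forall]
  refine convex_iInter fun i => ?_
  convert convex_halfSpace_ge (y i • innerₗ E (x i)).isLinear 1 using 3 with w
  rw [LinearMap.smul_apply, innerₗ_apply_apply, real_inner_comm, smul_eq_mul]

variable {x y}

theorem inv_one_sub_smul_mem_augmentedSvmFeasible {ε : ℝ} {u : E} (hu : u ∈ svmFeasible x y)
    (hsmall : ε * ‖u‖ < 1) : (1 - ε * ‖u‖)⁻¹ • u ∈ augmentedSvmFeasible x y ε := by
  have hpos : 0 < 1 - ε * ‖u‖ := sub_pos.2 hsmall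
  intro i
  rw [real_inner_smul_left, norm_smul_of_nonneg (inv_pos.2 hpos).le, ← div_eq_inv_mul,
    ← div_eq_inv_mul, ← mul_div_assoc, mul_div_assoc', ← sub_div, le_div_iff₀ hpos]
  linarith [hu i]

theorem inv_one_add_smul_mem_svmFeasible {ε : ℝ} (hε : 0 ≤ ε) {w : E}
    (hw : w ∈ augmentedSvmFeasible x y ε) : (1 + ε * ‖w‖)⁻¹ • w ∈ svmFeasible x y := by
  have hpos : 0 < 1 + ε * ‖w‖ := by positivity
  intro i
  rw [real_inner_smul_left, ← div_eq_inv_mul, mul_div_assoc', le_div_iff₀ hpos]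
  linarith [hw i]

end

theorem symmetric_augmentation_preserves_svm_direction_general
    {d n : ℕ} (x : Fin n → EuclideanSpace ℝ (Fin d)) (y : Fin n → ℝ)
    (wh : EuclideanSpace ℝ (Fin d))
    -- `wh` solves the original hard-margin SVM:
    (hfeas : ∀ i, 1 ≤ y i * ⟪wh, x i⟫)
    (hopt : ∀ w : EuclideanSpace ℝ (Fin d), (∀ i, 1 ≤ y i * ⟪w, x i⟫) → ‖wh‖ ≤ ‖w‖)
    (ε : ℝ) (hε : 0 ≤ ε) (hsmall : ε * ‖wh‖ < 1)
    (w' : EuclideanSpace ℝ (Fin d))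
    -- `w'` solves the symmetrically augmented SVM:
    (hfeas' : ∀ i, 1 ≤ y i * ⟪w', x i⟫ - ε * ‖w'‖)
    (hopt' : ∀ w : EuclideanSpace ℝ (Fin d),
      (∀ i, 1 ≤ y i * ⟪w, x i⟫ - ε * ‖w‖) → ‖w'‖ ≤ ‖w‖) :
    (∃ c : ℝ, 0 < c ∧ w' = c • wh) ∧
    (∀ z : EuclideanSpace ℝ (Fin d), ⟪w', z⟫ = 0 ↔ ⟪wh, z⟫ = 0) := by
  have hv : (1 + ε * ‖w'‖)⁻¹ • w' ∈ svmFeasible x y := inv_one_add_smul_mem_svmFeasible hε hfeas'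
  have hv_le : ‖(1 + ε * ‖w'‖)⁻¹ • w'‖ ≤ ‖wh‖ :=
    norm_inv_one_add_smul_le hε hsmall
      (hopt' _ (inv_one_sub_smul_mem_augmentedSvmFeasible hfeas hsmall))
  have hv_eq : (1 + ε * ‖w'‖)⁻¹ • w' = wh :=
    (convex_svmFeasible x y).eq_of_isMinOn_norm hv hfeas
      (isMinOn_iff.2 fun w hw => hv_le.trans (hopt w hw)) (isMinOn_iff.2 hopt)
  have hc : 0 < 1 + ε * ‖w'‖ := by positivity
  have hw' : w' = (1 + ε * ‖w'‖) • wh := by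
    rw [← hv_eq, smul_inv_smul₀ hc.ne']
  refine ⟨⟨_, hc, hw'⟩, fun z => ?_⟩
  rw [hw', real_inner_smul_left, mul_eq_zero_iff_left hc.ne']

/-- equal spherical augmentation of both classes does not change the max-margin
direction: the augmented-SVM minimizer is a positive scalar multiple of the SVM minimizer,
hence the decision boundary is unchanged. -/
theorem symmetric_augmentation_preserves_svm_direction
    {d n : ℕ} (x : Fin n → EuclideanSpace ℝ (Fin d)) (y : Fin n → ℝ)
    (hy : ∀ i, y i = 1 ∨ y i = -1)
    (wh : EuclideanSpace ℝ (Fin d)) (hwh : wh ≠ 0)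
    -- `wh` solves the original hard-margin SVM:
    (hfeas : ∀ i, 1 ≤ y i * ⟪wh, x i⟫)
    (hopt : ∀ w : EuclideanSpace ℝ (Fin d), (∀ i, 1 ≤ y i * ⟪w, x i⟫) → ‖wh‖ ≤ ‖w‖)
    (ε : ℝ) (hε : 0 ≤ ε) (hsmall : ε * ‖wh‖ < 1)
    (w' : EuclideanSpace ℝ (Fin d))
    -- `w'` solves the symmetrically augmented SVM:
    (hfeas' : ∀ i, 1 ≤ y i * ⟪w', x i⟫ - ε * ‖w'‖)
    (hopt' : ∀ w : EuclideanSpace ℝ (Fin d),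
      (∀ i, 1 ≤ y i * ⟪w, x i⟫ - ε * ‖w‖) → ‖w'‖ ≤ ‖w‖) :
    (∃ c : ℝ, 0 < c ∧ w' = c • wh) ∧
    (∀ z : EuclideanSpace ℝ (Fin d), ⟪w', z⟫ = 0 ↔ ⟪wh, z⟫ = 0) :=
  symmetric_augmentation_preserves_svm_direction_general x y wh hfeas hopt ε hε hsmall w' hfeas'
    hopt'
end
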